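/- The set of possible volumes of 3-way (v,3,2) Steiner trades is exactly ℕ \ {1,2,3,4,5,7}; i.e., a 3-way (v,3,2) Steiner trade of volume m exists (for some v) if and only if m ∉ {1,2,3,4,5,7}. -/

import Mathlib

/-- The blocks of a collection `Ti` that contain a given subset `S`. -/
def blocksContaining (Ti : Finset (Finset ℕ)) (S : Finset ℕ) : Finset (Finset ℕ) :=
  Ti.filter (fun B => S ⊆ B)

/-- `T` is a μ-way (v,k,t) trade of volume `m` with point set `V`:
μ pairwise disjoint collections, each of `m` k-subsets of the v-set `V`,
such that every t-subset of `V` is contained in the same number of blocks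
of each collection. -/
structure IsTrade (μ v k t m : ℕ) (V : Finset ℕ) (T : Fin μ → Finset (Finset ℕ)) : Prop where
  cardV : V.card = v
  volume : ∀ i, (T i).card = m
  blockSub : ∀ i, ∀ B ∈ T i, B ⊆ V
  blockCard : ∀ i, ∀ B ∈ T i, B.card = k
  disj : ∀ i j, i ≠ j → Disjoint (T i) (T j)
  balanced : ∀ S : Finset ℕ, S.card = t → ∀ i j,
    (blocksContaining (T i) S).card = (blocksContaining (T j) S).card

/-- A μ-way (v,k,t) Steiner trade: a trade in which every t-subset occurs
at most once in each collection. -/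
def IsSteinerTrade (μ v k t m : ℕ) (V : Finset ℕ) (T : Fin μ → Finset (Finset ℕ)) : Prop :=
  IsTrade μ v k t m V T ∧
  ∀ S : Finset ℕ, S.card = t → ∀ i, (blocksContaining (T i) S).card ≤ 1

/-- The foundation of a μ-way trade: the union of all its blocks. -/
def foundation {μ : ℕ} (T : Fin μ → Finset (Finset ℕ)) : Finset ℕ :=
  Finset.univ.biUnion (fun i => (T i).biUnion id)

/-- `T` is t-solely balanced: no two distinct collections contain a common
(t+1)-subset. -/
def SolelyBalanced {μ : ℕ} (t : ℕ) (T : Fin μ → Finset (Finset ℕ)) : Prop :=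
  ∀ i j : Fin μ, i ≠ j → ∀ S : Finset ℕ, S.card = t + 1 →
    ¬ ((∃ B ∈ T i, S ⊆ B) ∧ (∃ B ∈ T j, S ⊆ B))

/-!
Volumes 6, 8, 9, 10, 11 and 13 are realised by explicit trades, and disjoint unions of trades add
volumes, so every volume except 1, 2, 3, 4, 5, 7 occurs.

For nonexistence, each collection covers the same set of pairs exactly once, so the neighbourhood
of a point and its replication number `r_x` do not depend on the collection, and `2 r_x < n` on a
foundation of `n` points. Since two disjoint collections cannot use the same block, `r_x ≥ 2`, and
when `r_x = 2` the three collections pair up the four neighbours of `x` in the three possible ways,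
so these neighbours form a clique and have `r ≥ 3`. Counting gives `6 m ≤ n (n - 1)` and
`2 n + 4 ≤ 3 m ∨ n ≤ m`, which excludes `m ≤ 5` and leaves `n ∈ {7, 8}` for `m = 7`. On eight
points a short neighbourhood argument produces a point adjacent to all seven others, contradicting
that its degree `2 r` is even. On seven points the three collections are pairwise disjoint Fano
planes; labelled from a common non-line triangle, two disjoint Fano planes differ by an odd
permutation of the remaining four points, which is impossible for three of them.
-/

open Finset Function

theorem Finset.eq_triple_of_card_eq_three {α : Type*} [DecidableEq α] {B : Finset α} (hB : #B = 3)
    {a b c : α} (ha : a ∈ B) (hb : b ∈ B) (hc : c ∈ B) (hab : a ≠ b) (hac : a ≠ c) (hbc : b ≠ c) :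
    B = {a, b, c} :=
  (eq_of_subset_of_card_le (by simp [insert_subset_iff, ha, hb, hc])
    (by rw [hB, card_eq_three.2 ⟨a, b, c, hab, hac, hbc, rfl⟩])).symm

theorem Finset.inter_inter_nonempty_of_card_lt {α : Type*} [DecidableEq α] {S A B C : Finset α}
    (hA : A ⊆ S) (hB : B ⊆ S) (hC : C ⊆ S) (h : 2 * #S < #A + #B + #C) :
    (A ∩ B ∩ C).Nonempty := by
  have hAB := card_union_add_card_inter A B
  have hABC := card_union_add_card_inter (A ∩ B) C
  have h₁ := card_le_card (union_subset hA hB)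
  have h₂ := card_le_card (union_subset ((inter_subset_left (s₂ := B)).trans hA) hC)
  rw [← card_pos]
  omega

theorem Function.Injective.exists_perm_comp_eq {ι α : Type*} [Finite ι] {f g : ι → α}
    (hg : Injective g) (h : ∀ i, ∃ j, f j = g i) : ∃ σ : Equiv.Perm ι, g = f ∘ σ := by
  choose s hs using h
  have hs_inj : Injective s := fun i i' h => hg (by rw [← hs i, ← hs i', h])
  exact ⟨Equiv.ofBijective s (Finite.injective_iff_bijective.1 hs_inj), funext fun i => (hs i).symm⟩

theorem blocksContaining_eq_empty {W : Finset (Finset ℕ)} {S V : Finset ℕ}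
    (hW : ∀ B ∈ W, B ⊆ V) (hS : ¬S ⊆ V) : blocksContaining W S = ∅ :=
  filter_eq_empty_iff.2 fun B hB hSB => hS (hSB.trans (hW B hB))

theorem blocksContaining_image {f : ℕ → ℕ} (hf : Injective f) (W : Finset (Finset ℕ))
    (S : Finset ℕ) : blocksContaining (W.image (image f)) (S.image f) =
      (blocksContaining W S).image (image f) := by
  simp only [blocksContaining, filter_image, image_subset_image_iff hf]

namespace IsSteinerTrade

variable {μ v k t m : ℕ} {V : Finset ℕ} {T : Fin μ → Finset (Finset ℕ)}

theorem of_powersetCard (V : Finset ℕ) (T : Fin μ → Finset (Finset ℕ)) (hvol : ∀ i, #(T i) = m)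
    (hblock : ∀ i, ∀ B ∈ T i, B ⊆ V ∧ #B = k)
    (hdisj : ∀ i j, i ≠ j → Disjoint (T i) (T j))
    (hS : ∀ S ∈ V.powersetCard t, ∀ i j, #(blocksContaining (T i) S) =
      #(blocksContaining (T j) S) ∧ #(blocksContaining (T i) S) ≤ 1) :
    IsSteinerTrade μ #V k t m V T := by
  have hempty : ∀ S, ¬S ⊆ V → ∀ i, blocksContaining (T i) S = ∅ := fun S hSV i =>
    blocksContaining_eq_empty (fun B hB => (hblock i B hB).1) hSV
  refine ⟨⟨rfl, hvol, fun i B hB => (hblock i B hB).1, fun i B hB => (hblock i B hB).2, hdisj,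
    fun S hS' i j => ?_⟩, fun S hS' i => ?_⟩
  · by_cases hSV : S ⊆ V
    · exact (hS S (mem_powersetCard.2 ⟨hSV, hS'⟩) i j).1
    · rw [hempty S hSV i, hempty S hSV j]
  · by_cases hSV : S ⊆ V
    · exact (hS S (mem_powersetCard.2 ⟨hSV, hS'⟩) i i).2
    · simp [hempty S hSV i]

theorem map (H : IsSteinerTrade μ v k t m V T) {f : ℕ → ℕ} (hf : Injective f) :
    IsSteinerTrade μ v k t m (V.image f) (fun i => (T i).image (image f)) := by
  obtain ⟨HT, Hst⟩ := H
  have hfi : Injective (image f) := image_injective hf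
  have hcard : ∀ S, #S = t → (∃ S₀, #S₀ = t ∧ S₀.image f = S) ∨
      ∀ i, blocksContaining ((T i).image (image f)) S = ∅ := by
    intro S hS
    by_cases hSf : (S : Set ℕ) ⊆ Set.range f
    · rw [← Set.image_univ, subset_set_image_iff] at hSf
      obtain ⟨S₀, -, rfl⟩ := hSf
      exact Or.inl ⟨S₀, by rwa [card_image_of_injective _ hf] at hS, rfl⟩
    · refine Or.inr fun i => filter_eq_empty_iff.2 fun B hB hSB => hSf ?_
      obtain ⟨B₀, -, rfl⟩ := mem_image.1 hB
      exact (coe_subset.2 hSB).trans (by simp)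
  refine ⟨⟨?_, fun i => ?_, fun i B hB => ?_, fun i B hB => ?_, fun i j hij => ?_,
    fun S hS i j => ?_⟩, fun S hS i => ?_⟩
  · rw [card_image_of_injective _ hf, HT.cardV]
  · rw [card_image_of_injective _ hfi, HT.volume i]
  · obtain ⟨B₀, hB₀, rfl⟩ := mem_image.1 hB
    exact image_subset_image (HT.blockSub i B₀ hB₀)
  · obtain ⟨B₀, hB₀, rfl⟩ := mem_image.1 hB
    rw [card_image_of_injective _ hf, HT.blockCard i B₀ hB₀]
  · exact (disjoint_image hfi).2 (HT.disj i j hij)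
  · rcases hcard S hS with ⟨S₀, hS₀, rfl⟩ | hz
    · simp only [blocksContaining_image hf, card_image_of_injective _ hfi, HT.balanced S₀ hS₀ i j]
    · rw [hz i, hz j]
  · rcases hcard S hS with ⟨S₀, hS₀, rfl⟩ | hz
    · rw [blocksContaining_image hf, card_image_of_injective _ hfi]
      exact Hst S₀ hS₀ i
    · simp [hz i]

theorem union {v₁ v₂ m₁ m₂ : ℕ} {V₁ V₂ : Finset ℕ} {T₁ T₂ : Fin μ → Finset (Finset ℕ)}
    (H₁ : IsSteinerTrade μ v₁ k t m₁ V₁ T₁) (H₂ : IsSteinerTrade μ v₂ k t m₂ V₂ T₂)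
    (hk : k ≠ 0) (ht : t ≠ 0) (hV : Disjoint V₁ V₂) :
    IsSteinerTrade μ (v₁ + v₂) k t (m₁ + m₂) (V₁ ∪ V₂) (fun i => T₁ i ∪ T₂ i) := by
  obtain ⟨HT₁, Hst₁⟩ := H₁
  obtain ⟨HT₂, Hst₂⟩ := H₂
  have hT : ∀ i j, Disjoint (T₁ i) (T₂ j) := fun i j => disjoint_left.2 fun B hB₁ hB₂ => by
    have := (hV.mono_left (HT₁.blockSub i B hB₁)).eq_bot_of_le (HT₂.blockSub j B hB₂)
    exact hk (by rw [← HT₁.blockCard i B hB₁, this, bot_eq_empty, card_empty])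
  have hcard : ∀ i S, #(blocksContaining (T₁ i ∪ T₂ i) S) =
      #(blocksContaining (T₁ i) S) + #(blocksContaining (T₂ i) S) := fun i S => by
    rw [blocksContaining, filter_union, card_union_of_disjoint (disjoint_filter_filter (hT i i))]
    rfl
  refine ⟨⟨?_, fun i => ?_, fun i B hB => ?_, fun i B hB => ?_, fun i j hij => ?_,
    fun S hS i j => ?_⟩, fun S hS i => ?_⟩
  · rw [card_union_of_disjoint hV, HT₁.cardV, HT₂.cardV]
  · rw [card_union_of_disjoint (hT i i), HT₁.volume i, HT₂.volume i]
  · rcases mem_union.1 hB with h | h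
    · exact (HT₁.blockSub i B h).trans subset_union_left
    · exact (HT₂.blockSub i B h).trans subset_union_right
  · rcases mem_union.1 hB with h | h
    exacts [HT₁.blockCard i B h, HT₂.blockCard i B h]
  · exact disjoint_union_left.2 ⟨disjoint_union_right.2 ⟨HT₁.disj i j hij, hT i j⟩,
      disjoint_union_right.2 ⟨(hT j i).symm, HT₂.disj i j hij⟩⟩
  · rw [hcard, hcard, HT₁.balanced S hS i j, HT₂.balanced S hS i j]
  · rw [hcard]
    by_contra! h
    have hS₁ : S ⊆ V₁ := by
      by_contra hS₁
      have h₂ := Hst₂ S hS i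
      rw [blocksContaining_eq_empty (HT₁.blockSub i) hS₁, card_empty] at h
      omega
    have hS₂ : S ⊆ V₂ := by
      by_contra hS₂
      have h₁ := Hst₁ S hS i
      rw [blocksContaining_eq_empty (HT₂.blockSub i) hS₂, card_empty] at h
      omega
    exact ht (by rw [← hS, (hV.mono_left hS₁).eq_bot_of_le hS₂, bot_eq_empty, card_empty])

theorem exists_add {m₁ m₂ : ℕ} (hk : k ≠ 0) (ht : t ≠ 0)
    (h₁ : ∃ v V T, IsSteinerTrade μ v k t m₁ V T) (h₂ : ∃ v V T, IsSteinerTrade μ v k t m₂ V T) :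
    ∃ v V T, IsSteinerTrade μ v k t (m₁ + m₂) V T := by
  obtain ⟨v₁, V₁, T₁, H₁⟩ := h₁
  obtain ⟨v₂, V₂, T₂, H₂⟩ := h₂
  have hV : Disjoint V₁ (V₂.image (· + (V₁.sup id + 1))) := disjoint_right.2 fun u hu hu₁ => by
    obtain ⟨w, -, rfl⟩ := mem_image.1 hu
    have := le_sup (f := id) hu₁
    simp only [id] at this
    omega
  exact ⟨_, _, _, H₁.union (H₂.map (add_left_injective _)) hk ht hV⟩

end IsSteinerTrade

namespace SteinerTrade

def trade6 : Fin 3 → Finset (Finset ℕ) :=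
  ![{{0,3,6},{0,4,5},{1,3,5},{1,4,6},{2,3,4},{2,5,6}},
    {{0,3,5},{0,4,6},{1,3,4},{1,5,6},{2,3,6},{2,4,5}},
    {{0,3,4},{0,5,6},{1,3,6},{1,4,5},{2,3,5},{2,4,6}}]

def trade8 : Fin 3 → Finset (Finset ℕ) :=
  ![{{0,1,2},{0,3,6},{0,4,5},{1,3,5},{1,4,7},{2,3,7},{2,4,6},{5,6,7}},
    {{0,1,5},{0,2,3},{0,4,6},{1,2,4},{1,3,7},{2,6,7},{3,5,6},{4,5,7}},
    {{0,1,3},{0,2,4},{0,5,6},{1,2,7},{1,4,5},{2,3,6},{3,5,7},{4,6,7}}]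

def trade9 : Fin 3 → Finset (Finset ℕ) :=
  ![{{0,2,4},{0,5,6},{0,7,8},{1,2,6},{1,4,7},{1,5,8},{2,3,8},{3,4,6},{3,5,7}},
    {{0,2,6},{0,4,7},{0,5,8},{1,2,8},{1,4,6},{1,5,7},{2,3,4},{3,5,6},{3,7,8}},
    {{0,2,8},{0,4,6},{0,5,7},{1,2,4},{1,5,6},{1,7,8},{2,3,6},{3,4,7},{3,5,8}}]

def trade10 : Fin 3 → Finset (Finset ℕ) :=
  ![{{0,1,4},{0,2,7},{0,3,8},{0,5,6},{1,2,8},{1,3,7},{2,3,6},{3,4,5},{4,6,8},{5,7,8}},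
    {{0,1,2},{0,3,6},{0,4,8},{0,5,7},{1,3,4},{1,7,8},{2,3,7},{2,6,8},{3,5,8},{4,5,6}},
    {{0,1,3},{0,2,6},{0,4,5},{0,7,8},{1,2,7},{1,4,8},{2,3,8},{3,4,6},{3,5,7},{5,6,8}}]

def trade11 : Fin 3 → Finset (Finset ℕ) :=
  ![{{0,1,3},{0,4,7},{0,6,8},{1,2,4},{1,5,8},{1,6,7},{2,3,6},{2,7,8},{3,4,8},{3,5,7},{4,5,6}},
    {{0,1,7},{0,3,8},{0,4,6},{1,2,3},{1,4,5},{1,6,8},{2,4,8},{2,6,7},{3,4,7},{3,5,6},{5,7,8}},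
    {{0,1,6},{0,3,4},{0,7,8},{1,2,8},{1,3,5},{1,4,7},{2,3,7},{2,4,6},{3,6,8},{4,5,8},{5,6,7}}]

def trade13 : Fin 3 → Finset (Finset ℕ) :=
  ![{{0,1,6},{0,2,4},{0,3,9},{0,5,8},{1,2,5},{1,3,7},{1,4,8},{2,3,8},{2,6,9},{3,5,6},{4,5,9},
      {4,6,7},{7,8,9}},
    {{0,1,8},{0,2,5},{0,3,6},{0,4,9},{1,2,6},{1,3,5},{1,4,7},{2,3,9},{2,4,8},{3,7,8},{4,5,6},
      {5,8,9},{6,7,9}},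
    {{0,1,4},{0,2,8},{0,3,5},{0,6,9},{1,2,3},{1,5,6},{1,7,8},{2,4,6},{2,5,9},{3,6,7},{3,8,9},
      {4,5,8},{4,7,9}}]

theorem exists_of_mem_base {m : ℕ} (hm : m ∈ ({0, 6, 8, 9, 10, 11, 13} : Finset ℕ)) :
    ∃ v V T, IsSteinerTrade 3 v 3 2 m V T := by
  have mk := fun T =>
    IsSteinerTrade.of_powersetCard (μ := 3) (k := 3) (t := 2) (m := m) (foundation T) T
  simp only [mem_insert, mem_singleton] at hm
  obtain rfl | rfl | rfl | rfl | rfl | rfl | rfl := hm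
  · exact ⟨_, _, _, mk ![∅, ∅, ∅] (by decide) (by decide) (by decide) (by decide)⟩
  · exact ⟨_, _, _, mk trade6 (by decide) (by decide) (by decide) (by decide)⟩
  · exact ⟨_, _, _, mk trade8 (by decide) (by decide) (by decide) (by decide)⟩
  · exact ⟨_, _, _, mk trade9 (by decide) (by decide) (by decide) (by decide)⟩
  · exact ⟨_, _, _, mk trade10 (by decide) (by decide) (by decide) (by decide)⟩
  · exact ⟨_, _, _, mk trade11 (by decide) (by decide) (by decide) (by decide)⟩
  · exact ⟨_, _, _, mk trade13 (by decide) (by decide) (by decide) (by decide)⟩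

theorem exists_of_notMem {m : ℕ} (hm : m ∉ ({1, 2, 3, 4, 5, 7} : Finset ℕ)) :
    ∃ v V T, IsSteinerTrade 3 v 3 2 m V T := by
  induction m using Nat.strong_induction_on with
  | _ m ih =>
    simp only [mem_insert, mem_singleton, not_or] at hm
    by_cases hbase : m ∈ ({0, 6, 8, 9, 10, 11, 13} : Finset ℕ)
    · exact exists_of_mem_base hbase
    · simp only [mem_insert, mem_singleton, not_or] at hbase
      have h := IsSteinerTrade.exists_add (by norm_num) (by norm_num)
        (ih (m - 6) (by omega) (by simp; omega)) (exists_of_mem_base (m := 6) (by simp))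
      rwa [Nat.sub_add_cancel (by omega)] at h

section

def replication (W : Finset (Finset ℕ)) (x : ℕ) : ℕ := #{B ∈ W | x ∈ B}

def neighbours (W : Finset (Finset ℕ)) (x : ℕ) : Finset ℕ := {B ∈ W | x ∈ B}.biUnion (·.erase x)

variable {W : Finset (Finset ℕ)} {x y : ℕ}

theorem mem_neighbours : y ∈ neighbours W x ↔ ∃ B ∈ W, x ∈ B ∧ y ∈ B ∧ y ≠ x := by
  simp only [neighbours, mem_biUnion, mem_filter, mem_erase]
  tauto

theorem mem_neighbours_comm : y ∈ neighbours W x ↔ x ∈ neighbours W y := by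
  simp only [mem_neighbours]
  exact ⟨fun ⟨B, hB, hx, hy, hyx⟩ => ⟨B, hB, hy, hx, hyx.symm⟩,
    fun ⟨B, hB, hy, hx, hxy⟩ => ⟨B, hB, hx, hy, hxy.symm⟩⟩

theorem notMem_neighbours_self : x ∉ neighbours W x := fun h =>
  (mem_neighbours.1 h).choose_spec.2.2.2 rfl

theorem sum_replication {F : Finset ℕ} {k : ℕ} (hW : ∀ B ∈ W, B ⊆ F ∧ #B = k) :
    ∑ x ∈ F, replication W x = k * #W := by
  simp only [replication, card_filter]
  rw [sum_comm, card_eq_sum_ones, mul_sum, mul_one]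
  refine sum_congr rfl fun B hB => ?_
  rw [← card_filter, filter_mem_eq_inter, inter_eq_right.2 (hW B hB).1, (hW B hB).2]

variable {μ : ℕ} {T : Fin μ → Finset (Finset ℕ)}

theorem mem_foundation : x ∈ foundation T ↔ ∃ i, ∃ B ∈ T i, x ∈ B := by
  simp [foundation]

theorem subset_foundation {i : Fin μ} {B : Finset ℕ} (hB : B ∈ T i) : B ⊆ foundation T :=
  fun _ hx => mem_foundation.2 ⟨i, B, hB, hx⟩

theorem neighbours_subset (i : Fin μ) (x : ℕ) : neighbours (T i) x ⊆ (foundation T).erase x :=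
  fun _ hy => by
    obtain ⟨B, hB, -, hyB, hyx⟩ := mem_neighbours.1 hy
    exact mem_erase.2 ⟨hyx, subset_foundation hB hyB⟩

end

end SteinerTrade

namespace IsSteinerTrade

open SteinerTrade

section

variable {μ v k m : ℕ} {V : Finset ℕ} {T : Fin μ → Finset (Finset ℕ)} {i : Fin μ} {x y : ℕ}

theorem eq_of_mem_of_mem (H : IsSteinerTrade μ v k 2 m V T) {B B' : Finset ℕ} (hB : B ∈ T i)
    (hB' : B' ∈ T i) (hxy : x ≠ y) (hx : x ∈ B) (hy : y ∈ B) (hx' : x ∈ B') (hy' : y ∈ B') :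
    B = B' := by
  by_contra hne
  have h₁ := H.2 {x, y} (card_pair hxy) i
  have h₂ : 1 < #(blocksContaining (T i) {x, y}) := one_lt_card.2
    ⟨B, by simp [blocksContaining, hB, insert_subset_iff, hx, hy],
      B', by simp [blocksContaining, hB', insert_subset_iff, hx', hy'], hne⟩
  omega

theorem exists_block_iff (H : IsSteinerTrade μ v k 2 m V T) (hxy : x ≠ y) (i j : Fin μ) :
    (∃ B ∈ T i, x ∈ B ∧ y ∈ B) ↔ ∃ B ∈ T j, x ∈ B ∧ y ∈ B := by
  have hne : ∀ l, (blocksContaining (T l) {x, y}).Nonempty ↔ ∃ B ∈ T l, x ∈ B ∧ y ∈ B :=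
    fun l => by simp [Finset.Nonempty, blocksContaining, insert_subset_iff]
  rw [← hne, ← hne, ← card_pos, ← card_pos, H.1.balanced {x, y} (card_pair hxy) i j]

theorem neighbours_eq (H : IsSteinerTrade μ v k 2 m V T) (i j : Fin μ) (x : ℕ) :
    neighbours (T i) x = neighbours (T j) x := by
  ext y
  simp only [mem_neighbours]
  constructor <;> rintro ⟨B, hB, hx, hy, hyx⟩
  · obtain ⟨B', hB', h⟩ := (H.exists_block_iff hyx.symm i j).1 ⟨B, hB, hx, hy⟩
    exact ⟨B', hB', h.1, h.2, hyx⟩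
  · obtain ⟨B', hB', h⟩ := (H.exists_block_iff hyx.symm j i).1 ⟨B, hB, hx, hy⟩
    exact ⟨B', hB', h.1, h.2, hyx⟩

theorem card_neighbours (H : IsSteinerTrade μ v 3 2 m V T) (i : Fin μ) (x : ℕ) :
    #(neighbours (T i) x) = 2 * replication (T i) x := by
  rw [neighbours, card_biUnion, replication, card_eq_sum_ones, mul_sum, mul_one]
  · refine sum_congr rfl fun B hB => ?_
    rw [mem_filter] at hB
    rw [card_erase_of_mem hB.2, H.1.blockCard i B hB.1]
  · intro B hB B' hB' hne
    simp only [coe_filter, Set.mem_ofPred_eq] at hB hB'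
    refine disjoint_left.2 fun y hy hy' => hne ?_
    rw [mem_erase] at hy hy'
    exact H.eq_of_mem_of_mem hB.1 hB'.1 hy.1.symm hB.2 hy.2 hB'.2 hy'.2

theorem replication_eq (H : IsSteinerTrade μ v 3 2 m V T) (i j : Fin μ) (x : ℕ) :
    replication (T i) x = replication (T j) x := by
  have := H.card_neighbours i x
  rw [H.neighbours_eq i j, H.card_neighbours j x] at this
  omega

theorem sum_replication (H : IsSteinerTrade μ v 3 2 m V T) (i : Fin μ) :
    ∑ x ∈ foundation T, replication (T i) x = 3 * m := by
  rw [SteinerTrade.sum_replication fun B hB => ⟨subset_foundation hB, H.1.blockCard i B hB⟩,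
    H.1.volume i]

theorem two_mul_replication_lt (H : IsSteinerTrade μ v 3 2 m V T) (i : Fin μ)
    (hx : x ∈ foundation T) : 2 * replication (T i) x < #(foundation T) := by
  rw [← H.card_neighbours i x, ← card_erase_add_one hx]
  exact Nat.lt_succ_of_le (card_le_card (neighbours_subset i x))

theorem two_le_replication (H : IsSteinerTrade μ v 3 2 m V T) {i j : Fin μ} (hij : i ≠ j)
    (hx : x ∈ foundation T) : 2 ≤ replication (T i) x := by
  obtain ⟨l, B, hB, hxB⟩ := mem_foundation.1 hx
  obtain ⟨y, hyB, hyx⟩ : ∃ y ∈ B, y ≠ x := exists_mem_ne (by rw [H.1.blockCard l B hB]; omega) x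
  obtain ⟨B₁, hB₁, hxB₁, hyB₁⟩ := (H.exists_block_iff hyx.symm l i).1 ⟨B, hB, hxB, hyB⟩
  obtain ⟨B₂, hB₂, hxB₂, hyB₂⟩ := (H.exists_block_iff hyx.symm l j).1 ⟨B, hB, hxB, hyB⟩
  have hB₂B₁ : ¬B₂ ⊆ B₁ := fun hsub => disjoint_left.1 (H.1.disj i j hij) hB₁ <|
    (eq_of_subset_of_card_le hsub (by rw [H.1.blockCard i B₁ hB₁, H.1.blockCard j B₂ hB₂])) ▸ hB₂
  obtain ⟨z, hzB₂, hzB₁⟩ := not_subset.1 hB₂B₁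
  have hzx : z ≠ x := fun h => hzB₁ (h ▸ hxB₁)
  obtain ⟨B₃, hB₃, hxB₃, hzB₃⟩ := (H.exists_block_iff hzx.symm j i).1 ⟨B₂, hB₂, hxB₂, hzB₂⟩
  exact one_lt_card.2 ⟨B₁, mem_filter.2 ⟨hB₁, hxB₁⟩, B₃, mem_filter.2 ⟨hB₃, hxB₃⟩,
    fun h => hzB₁ (h ▸ hzB₃)⟩

theorem six_mul_le (H : IsSteinerTrade μ v 3 2 m V T) (i : Fin μ) :
    6 * m ≤ #(foundation T) * (#(foundation T) - 1) := by
  calc 6 * m = ∑ x ∈ foundation T, #(neighbours (T i) x) := by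
        simp only [H.card_neighbours i, ← mul_sum, H.sum_replication i]; ring
    _ ≤ ∑ _x ∈ foundation T, (#(foundation T) - 1) :=
        sum_le_sum fun x hx => (card_le_card (neighbours_subset i x)).trans
          (card_erase_of_mem hx).le
    _ = #(foundation T) * (#(foundation T) - 1) := by rw [sum_const, smul_eq_mul]

end

section

variable {v m : ℕ} {V : Finset ℕ} {T : Fin 3 → Finset (Finset ℕ)} {x y : ℕ}

/-- Let `B₁, B₂` be the two blocks of `T 0` through a point `x` of replication number 2, and
`y ≠ x` a point of `B₁`. The blocks of `T 1` and `T 2` through `x, y` are different, so their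
third points `e ≠ f` both lie in `B₂`; the blocks of `T 0` through `y, e` and `y, f` are then
two more blocks through `y`. -/
theorem three_le_replication_and_subset_neighbours (H : IsSteinerTrade 3 v 3 2 m V T)
    {B₁ B₂ : Finset ℕ} (hB₁ : B₁ ∈ T 0) (hB₂ : B₂ ∈ T 0) (hne : B₁ ≠ B₂) (hxB₁ : x ∈ B₁)
    (hxB₂ : x ∈ B₂) (hnb : neighbours (T 0) x = B₁.erase x ∪ B₂.erase x) (hyB₁ : y ∈ B₁)
    (hyx : y ≠ x) :
    3 ≤ replication (T 0) y ∧ B₂.erase x ⊆ neighbours (T 0) y := by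
  have hthird : ∀ j : Fin 3, j ≠ 0 → ∃ C ∈ T j, x ∈ C ∧ y ∈ C ∧ ∃ e ∈ C, e ∉ B₁ ∧ e ∈ B₂ := by
    intro j hj
    obtain ⟨C, hC, hxC, hyC⟩ := (H.exists_block_iff hyx.symm 0 j).1 ⟨B₁, hB₁, hxB₁, hyB₁⟩
    have hCB₁ : ¬C ⊆ B₁ := fun hsub => disjoint_left.1 (H.1.disj 0 j hj.symm) hB₁ <|
      (eq_of_subset_of_card_le hsub (by rw [H.1.blockCard 0 B₁ hB₁, H.1.blockCard j C hC])) ▸ hC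
    obtain ⟨e, heC, heB₁⟩ := not_subset.1 hCB₁
    have hex : e ≠ x := fun h => heB₁ (h ▸ hxB₁)
    have he : e ∈ neighbours (T 0) x :=
      H.neighbours_eq j 0 x ▸ mem_neighbours.2 ⟨C, hC, hxC, heC, hex⟩
    rw [hnb, mem_union, mem_erase, mem_erase] at he
    exact ⟨C, hC, hxC, hyC, e, heC, heB₁, (he.resolve_left fun h => heB₁ h.2).2⟩
  obtain ⟨C, hC, hxC, hyC, e, heC, heB₁, heB₂⟩ := hthird 1 (by decide)
  obtain ⟨D, hD, hxD, hyD, f, hfD, hfB₁, hfB₂⟩ := hthird 2 (by decide)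
  have hey : e ≠ y := fun h => heB₁ (h ▸ hyB₁)
  have hfy : f ≠ y := fun h => hfB₁ (h ▸ hyB₁)
  have hex : e ≠ x := fun h => heB₁ (h ▸ hxB₁)
  have hfx : f ≠ x := fun h => hfB₁ (h ▸ hxB₁)
  have hef : e ≠ f := by
    rintro rfl
    have hCD : C = D := by
      rw [eq_triple_of_card_eq_three (H.1.blockCard 1 C hC) hxC hyC heC hyx.symm hex.symm hey.symm,
        eq_triple_of_card_eq_three (H.1.blockCard 2 D hD) hxD hyD hfD hyx.symm hex.symm hey.symm]
    exact disjoint_left.1 (H.1.disj 1 2 (by decide)) hC (hCD ▸ hD)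
  have hB₂eq : B₂ = {x, e, f} :=
    eq_triple_of_card_eq_three (H.1.blockCard 0 B₂ hB₂) hxB₂ heB₂ hfB₂ hex.symm hfx.symm hef
  obtain ⟨Be, hBe, hyBe, heBe⟩ := (H.exists_block_iff hey.symm 1 0).1 ⟨C, hC, hyC, heC⟩
  obtain ⟨Bf, hBf, hyBf, hfBf⟩ := (H.exists_block_iff hfy.symm 2 0).1 ⟨D, hD, hyD, hfD⟩
  refine ⟨?_, fun z hz => ?_⟩
  · have hBef : Be ≠ Bf := by
      rintro rfl
      have hyB₂ : y ∈ B₂ := H.eq_of_mem_of_mem hBe hB₂ hef heBe hfBf heB₂ hfB₂ ▸ hyBe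
      exact hne (H.eq_of_mem_of_mem hB₁ hB₂ hyx hyB₁ hxB₁ hyB₂ hxB₂)
    exact two_lt_card.2 ⟨B₁, mem_filter.2 ⟨hB₁, hyB₁⟩, Be, mem_filter.2 ⟨hBe, hyBe⟩,
      Bf, mem_filter.2 ⟨hBf, hyBf⟩, fun h => heB₁ (h ▸ heBe), fun h => hfB₁ (h ▸ hfBf), hBef⟩
  · rw [hB₂eq, erase_insert (by simp [hex.symm, hfx.symm]), mem_insert, mem_singleton] at hz
    rcases hz with rfl | rfl
    exacts [mem_neighbours.2 ⟨Be, hBe, hyBe, heBe, hey⟩,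
      mem_neighbours.2 ⟨Bf, hBf, hyBf, hfBf, hfy⟩]

theorem neighbours_of_replication_eq_two (H : IsSteinerTrade 3 v 3 2 m V T)
    (hx : replication (T 0) x = 2) (hy : y ∈ neighbours (T 0) x) :
    3 ≤ replication (T 0) y ∧ (neighbours (T 0) x).erase y ⊆ neighbours (T 0) y := by
  obtain ⟨B₁, B₂, hne, hB⟩ := card_eq_two.1 hx
  have hmem : ∀ B, B ∈ T 0 ∧ x ∈ B ↔ B = B₁ ∨ B = B₂ := fun B => by
    simpa only [mem_filter, mem_insert, mem_singleton] using Finset.ext_iff.1 hB B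
  obtain ⟨hB₁, hxB₁⟩ := (hmem B₁).2 (Or.inl rfl)
  obtain ⟨hB₂, hxB₂⟩ := (hmem B₂).2 (Or.inr rfl)
  have hnb : neighbours (T 0) x = B₁.erase x ∪ B₂.erase x := by
    rw [neighbours, hB, biUnion_insert, singleton_biUnion]
  have hblock : ∀ {B B'}, B ∈ T 0 → B' ∈ T 0 → B ≠ B' → x ∈ B → x ∈ B' →
      neighbours (T 0) x = B.erase x ∪ B'.erase x → y ∈ B.erase x →
      3 ≤ replication (T 0) y ∧ (neighbours (T 0) x).erase y ⊆ neighbours (T 0) y := by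
    intro B B' hB hB' hBB' hxB hxB' hnbB hyB
    obtain ⟨hyx, hyB⟩ := mem_erase.1 hyB
    obtain ⟨h3, hsub⟩ :=
      H.three_le_replication_and_subset_neighbours hB hB' hBB' hxB hxB' hnbB hyB hyx
    refine ⟨h3, fun z hz => ?_⟩
    obtain ⟨hzy, hz⟩ := mem_erase.1 hz
    rw [hnbB, mem_union] at hz
    rcases hz with hz | hz
    · exact mem_neighbours.2 ⟨B, hB, hyB, (mem_erase.1 hz).2, hzy⟩
    · exact hsub hz
  rw [hnb, mem_union] at hy
  rcases hy with hy | hy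
  · exact hblock hB₁ hB₂ hne hxB₁ hxB₂ hnb hy
  · exact hblock hB₂ hB₁ hne.symm hxB₂ hxB₁ (by rw [hnb, union_comm]) hy

theorem card_foundation_bound (H : IsSteinerTrade 3 v 3 2 m V T) :
    2 * #(foundation T) + 4 ≤ 3 * m ∨ #(foundation T) ≤ m := by
  have hr2 : ∀ y ∈ foundation T, 2 ≤ replication (T 0) y := fun y hy =>
    H.two_le_replication (j := 1) (by decide) hy
  by_cases h : ∃ x ∈ foundation T, replication (T 0) x = 2
  · obtain ⟨x, -, hx⟩ := h
    left
    have h4 : 4 ≤ #{y ∈ foundation T | 3 ≤ replication (T 0) y} := by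
      rw [← show #(neighbours (T 0) x) = 4 by rw [H.card_neighbours, hx]]
      exact card_le_card fun y hy => mem_filter.2 ⟨(mem_erase.1 (neighbours_subset 0 x hy)).2,
        (H.neighbours_of_replication_eq_two hx hy).1⟩
    calc 2 * #(foundation T) + 4
        ≤ ∑ y ∈ foundation T, (2 + if 3 ≤ replication (T 0) y then 1 else 0) := by
          rw [sum_add_distrib, sum_const, sum_boole, smul_eq_mul, Nat.cast_id]; omega
      _ ≤ ∑ y ∈ foundation T, replication (T 0) y := sum_le_sum fun y hy => by
          have := hr2 y hy; split_ifs <;> omega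
      _ = 3 * m := H.sum_replication 0
  · push Not at h
    right
    have := H.sum_replication 0 ▸ card_nsmul_le_sum _ _ 3 fun y hy => by
      have := hr2 y hy; have := h y hy; omega
    rw [smul_eq_mul] at this
    omega

theorem eq_zero_of_le_five (H : IsSteinerTrade 3 v 3 2 m V T) (hm : m ≤ 5) : m = 0 := by
  have h₁ := H.six_mul_le 0
  have h₂ := H.card_foundation_bound
  generalize #(foundation T) = n at h₁ h₂
  have : n ≤ 7 := by omega
  interval_cases n <;> omega

theorem replication_mem_of_card_eight (H : IsSteinerTrade 3 v 3 2 m V T)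
    (hn : #(foundation T) = 8) {y : ℕ} (hy : y ∈ foundation T) :
    replication (T 0) y = 2 ∨ replication (T 0) y = 3 := by
  have := H.two_le_replication (i := 0) (j := 1) (by decide) hy
  have := H.two_mul_replication_lt 0 hy
  omega

theorem mem_neighbours_of_card_eight (H : IsSteinerTrade 3 v 3 2 m V T)
    (hn : #(foundation T) = 8) {w x z : ℕ} (hw : w ∈ foundation T) (hw3 : replication (T 0) w = 3)
    (hx : x ∈ foundation T) (hxw : x ≠ w) (hxnb : x ∉ neighbours (T 0) w) (hz : z ∈ foundation T)
    (hzw : z ≠ w) (hzx : z ≠ x) : z ∈ neighbours (T 0) w := by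
  have hsub : neighbours (T 0) w ⊆ ((foundation T).erase w).erase x := fun t ht =>
    mem_erase.2 ⟨fun h => hxnb (h ▸ ht), neighbours_subset 0 w ht⟩
  rw [eq_of_subset_of_card_le hsub (by rw [card_erase_of_mem (mem_erase.2 ⟨hxw, hx⟩),
    card_erase_of_mem hw, hn, H.card_neighbours, hw3])]
  exact mem_erase.2 ⟨hzx, mem_erase.2 ⟨hzw, hz⟩⟩

theorem card_replication_eq_two_of_card_eight (H : IsSteinerTrade 3 v 3 2 7 V T)
    (hn : #(foundation T) = 8) : #{y ∈ foundation T | replication (T 0) y = 2} = 3 := by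
  have hsum : ∑ y ∈ foundation T, replication (T 0) y +
      #{y ∈ foundation T | replication (T 0) y = 2} = ∑ _y ∈ foundation T, 3 := by
    rw [card_eq_sum_ones, sum_filter, ← sum_add_distrib]
    exact sum_congr rfl fun y hy => by
      rcases H.replication_mem_of_card_eight hn hy with h | h <;> simp [h]
  rw [H.sum_replication 0, sum_const, hn, smul_eq_mul] at hsum
  omega

/-- The three points of replication number 2 have neighbourhoods of four points inside the five
remaining points, so some point `u` is adjacent to all three of them, and then to every point. -/
theorem card_foundation_ne_eight (H : IsSteinerTrade 3 v 3 2 7 V T) : #(foundation T) ≠ 8 := by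
  intro hn
  set F := foundation T
  set D := {y ∈ F | replication (T 0) y = 2}
  have hD : #D = 3 := H.card_replication_eq_two_of_card_eight hn
  have hFD : #(F \ D) = 5 := by rw [card_sdiff_of_subset (filter_subset _ _), hD, hn]
  have hnb : ∀ d ∈ D, neighbours (T 0) d ⊆ F \ D ∧ #(neighbours (T 0) d) = 4 := by
    intro d hd
    have hd2 := (mem_filter.1 hd).2
    refine ⟨fun y hy => mem_sdiff.2 ⟨(mem_erase.1 (neighbours_subset 0 d hy)).2, fun hyD => ?_⟩,
      by rw [H.card_neighbours, hd2]⟩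
    have := (H.neighbours_of_replication_eq_two hd2 hy).1
    rw [(mem_filter.1 hyD).2] at this
    omega
  obtain ⟨x, p, q, -, -, -, hDeq⟩ := card_eq_three.1 hD
  have hx : x ∈ D := by simp [hDeq]
  have hp : p ∈ D := by simp [hDeq]
  have hq : q ∈ D := by simp [hDeq]
  have hx2 : replication (T 0) x = 2 := (mem_filter.1 hx).2
  obtain ⟨u, hu⟩ := inter_inter_nonempty_of_card_lt (hnb x hx).1 (hnb p hp).1 (hnb q hq).1
    (by rw [hFD, (hnb x hx).2, (hnb p hp).2, (hnb q hq).2]; norm_num)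
  have huD : ∀ d ∈ D, u ∈ neighbours (T 0) d := by
    simp only [hDeq, mem_insert, mem_singleton, mem_inter] at hu ⊢
    rintro d (rfl | rfl | rfl) <;> tauto
  have hux : u ∈ neighbours (T 0) x := huD x hx
  have huF : u ∈ F := (mem_erase.1 (neighbours_subset 0 x hux)).2
  have hall : F.erase u ⊆ neighbours (T 0) u := by
    intro w hw
    obtain ⟨hwu, hwF⟩ := mem_erase.1 hw
    by_cases hwD : w ∈ D
    · exact mem_neighbours_comm.1 (huD w hwD)
    by_cases hwx : w ∈ neighbours (T 0) x
    · exact (H.neighbours_of_replication_eq_two hx2 hux).2 (mem_erase.2 ⟨hwu, hwx⟩)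
    · refine mem_neighbours_comm.1 (H.mem_neighbours_of_card_eight hn hwF
        ((H.replication_mem_of_card_eight hn hwF).resolve_left fun h => hwD (mem_filter.2 ⟨hwF, h⟩))
        (mem_filter.1 hx).1 (fun h => hwD (h ▸ hx)) (fun h => hwx (mem_neighbours_comm.1 h)) huF
        (Ne.symm hwu) fun h => notMem_neighbours_self (h ▸ hux))
  have h₁ := card_le_card hall
  have h₂ := H.two_mul_replication_lt 0 huF
  rw [card_erase_of_mem huF, hn, H.card_neighbours] at h₁
  rw [hn] at h₂
  omega

end

end IsSteinerTrade

namespace SteinerTrade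

open Equiv

structure IsSteinerTripleSystem (F : Finset ℕ) (W : Finset (Finset ℕ)) : Prop where
  subset : ∀ B ∈ W, B ⊆ F
  card : ∀ B ∈ W, #B = 3
  exists_block : ∀ u ∈ F, ∀ v ∈ F, u ≠ v → ∃ B ∈ W, u ∈ B ∧ v ∈ B
  eq_of_mem : ∀ B ∈ W, ∀ B' ∈ W, ∀ u v, u ≠ v → u ∈ B → v ∈ B → u ∈ B' → v ∈ B' → B = B'

/-- The seven lines of the Fano plane through the triangle `a, b, c`, whose sides `ab, ac, bc`
have third points `ℓ 0, ℓ 1, ℓ 2`, and whose seventh point is `ℓ 3`. -/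
def fanoLines {α : Type*} [DecidableEq α] (a b c : α) (ℓ : Fin 4 → α) : Finset (Finset α) :=
  {{a, b, ℓ 0}, {a, c, ℓ 1}, {b, c, ℓ 2}, {a, ℓ 2, ℓ 3}, {b, ℓ 1, ℓ 3}, {c, ℓ 0, ℓ 3},
    {ℓ 0, ℓ 1, ℓ 2}}

theorem image_fanoLines {α β : Type*} [DecidableEq α] [DecidableEq β] (f : α → β) (a b c : α)
    (ℓ : Fin 4 → α) :
    (fanoLines a b c ℓ).image (image f) = fanoLines (f a) (f b) (f c) (f ∘ ℓ) := by
  simp [fanoLines, image_insert]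

/-- The Fano planes on `Fin 7` in which `{0, 1, 2}` is not a line, indexed by the labelling of the
remaining points. -/
def fanoPlane (σ : Perm (Fin 4)) : Finset (Finset (Fin 7)) :=
  fanoLines 0 1 2 (Fin.natAdd 3 ∘ σ)

/-- Two such planes are disjoint exactly when their labellings differ by a 4-cycle, an odd
permutation. -/
theorem sign_eq_neg_one_of_disjoint_fanoPlane :
    ∀ σ τ : Perm (Fin 4), Disjoint (fanoPlane σ) (fanoPlane τ) → Perm.sign (σ⁻¹ * τ) = -1 := by
  decide

/-- The relative labellings would be three odd permutations, one of which is the product of the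
other two. -/
theorem not_pairwise_disjoint_fanoLines {a b c : ℕ} (hab : a ≠ b) (hac : a ≠ c) (hbc : b ≠ c)
    {Q : Finset ℕ} (hQ : #Q = 4) (habcQ : ∀ q ∈ Q, q ≠ a ∧ q ≠ b ∧ q ≠ c)
    (ℓ : Fin 3 → Fin 4 → ℕ) (hℓ : ∀ i, Injective (ℓ i)) (hℓQ : ∀ i k, ℓ i k ∈ Q) :
    ¬∀ i j, i ≠ j → Disjoint (fanoLines a b c (ℓ i)) (fanoLines a b c (ℓ j)) := by
  intro hdisj
  have hsurj : ∀ q ∈ Q, ∃ k, ℓ 0 k = q := by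
    have : univ.image (ℓ 0) = Q := eq_of_subset_of_card_le (by simp [image_subset_iff, hℓQ])
      (by rw [hQ, card_image_of_injective _ (hℓ 0), card_univ, Fintype.card_fin])
    simp [← this]
  choose σ hσ using fun i => (hℓ i).exists_perm_comp_eq fun k => hsurj (ℓ i k) (hℓQ i k)
  set e : Fin 7 → ℕ := Fin.append ![a, b, c] (ℓ 0)
  have he : Injective e := Fin.append_injective_iff.2 ⟨fun i j h => by
    fin_cases i <;> fin_cases j <;>
      first | rfl | simp [hab, hac, hbc, hab.symm, hac.symm, hbc.symm] at h, hℓ 0, fun i k => by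
    have := habcQ _ (hℓQ 0 k); fin_cases i <;> simp [this.1.symm, this.2.1.symm, this.2.2.symm]⟩
  have himage : ∀ i, fanoLines a b c (ℓ i) = (fanoPlane (σ i)).image (image e) := fun i => by
    rw [fanoPlane, image_fanoLines, ← comp_assoc]
    simp only [e, comp_def, Fin.append_right, hσ i]
    rfl
  have hsign : ∀ i j, i ≠ j → Perm.sign ((σ i)⁻¹ * σ j) = -1 := fun i j hij =>
    sign_eq_neg_one_of_disjoint_fanoPlane _ _ <| (disjoint_image (image_injective he)).1 <| by
      rw [← himage, ← himage]; exact hdisj i j hij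
  have h02 := hsign 0 2 (by decide)
  rw [show (σ 0)⁻¹ * σ 2 = ((σ 0)⁻¹ * σ 1) * ((σ 1)⁻¹ * σ 2) by group, map_mul,
    hsign 0 1 (by decide), hsign 1 2 (by decide)] at h02
  exact absurd h02 (by decide)

namespace IsSteinerTripleSystem

variable {F : Finset ℕ} {W : Finset (Finset ℕ)}

theorem exists_third (hS : IsSteinerTripleSystem F W) {u v : ℕ} (hu : u ∈ F) (hv : v ∈ F)
    (huv : u ≠ v) : ∃ t ∈ F, t ≠ u ∧ t ≠ v ∧ {u, v, t} ∈ W := by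
  obtain ⟨B, hB, huB, hvB⟩ := hS.exists_block u hu v hv huv
  obtain ⟨t, ht⟩ := card_eq_one.1 (by
    rw [card_erase_of_mem (mem_erase.2 ⟨huv.symm, hvB⟩), card_erase_of_mem huB, hS.card B hB] :
    #((B.erase u).erase v) = 1)
  have htB : t ∈ (B.erase u).erase v := ht ▸ mem_singleton_self t
  simp only [mem_erase] at htB
  refine ⟨t, hS.subset B hB htB.2.2, htB.2.1, htB.1, ?_⟩
  rwa [← eq_triple_of_card_eq_three (hS.card B hB) huB hvB htB.2.2 huv htB.2.1.symm htB.1.symm]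

/-- In a Steiner triple system on seven points, the three blocks through a point `p` partition the
other six points into pairs, so two of them determine the third. -/
theorem mem_of_notMem_union (hS : IsSteinerTripleSystem F W) (hF : #F = 7) {B₁ B₂ : Finset ℕ}
    (hB₁ : B₁ ∈ W) (hB₂ : B₂ ∈ W) (hne : B₁ ≠ B₂) {p s t : ℕ} (hp₁ : p ∈ B₁) (hp₂ : p ∈ B₂)
    (hs : s ∈ F) (ht : t ∈ F) (hst : s ≠ t) (hs₁₂ : s ∉ B₁ ∪ B₂) (ht₁₂ : t ∉ B₁ ∪ B₂) :
    {p, s, t} ∈ W := by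
  have hmeet : ∀ {B B'}, B ∈ W → B' ∈ W → B ≠ B' → p ∈ B → p ∈ B' → ∀ z ∈ B, z ∈ B' → z = p :=
    fun hB hB' hBB' hp hp' z hz hz' => by_contra fun hzp =>
      hBB' (hS.eq_of_mem _ hB _ hB' p z (Ne.symm hzp) hp hz hp' hz')
  have hR : F \ (B₁ ∪ B₂) = {s, t} := by
    have h₁₂ : B₁ ∩ B₂ = {p} := eq_singleton_iff_unique_mem.2
      ⟨mem_inter.2 ⟨hp₁, hp₂⟩, fun z hz => hmeet hB₁ hB₂ hne hp₁ hp₂ z (mem_inter.1 hz).1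
        (mem_inter.1 hz).2⟩
    have := card_union_add_card_inter B₁ B₂
    rw [h₁₂, card_singleton, hS.card B₁ hB₁, hS.card B₂ hB₂] at this
    refine (eq_of_subset_of_card_le (by simp [insert_subset_iff, hs, ht, hs₁₂, ht₁₂]) ?_).symm
    rw [card_sdiff_of_subset (union_subset (hS.subset B₁ hB₁) (hS.subset B₂ hB₂)), hF,
      card_pair hst]
    omega
  obtain ⟨B, hB, hpB, hsB⟩ :=
    hS.exists_block p (hS.subset B₁ hB₁ hp₁) s hs fun h => hs₁₂ (h ▸ mem_union_left _ hp₁)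
  have hsub : B ⊆ insert p (F \ (B₁ ∪ B₂)) := by
    intro z hz
    by_cases hzp : z = p
    · exact hzp ▸ mem_insert_self _ _
    refine mem_insert_of_mem (mem_sdiff.2 ⟨hS.subset B hB hz, fun hz' => hzp ?_⟩)
    rcases mem_union.1 hz' with h | h
    · exact hmeet hB hB₁ (fun h' => hs₁₂ (h' ▸ mem_union_left _ hsB)) hpB hp₁ z hz h
    · exact hmeet hB hB₂ (fun h' => hs₁₂ (h' ▸ mem_union_right _ hsB)) hpB hp₂ z hz h
  rw [hR] at hsub
  rwa [← eq_of_subset_of_card_le hsub (by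
    rw [card_insert_of_notMem fun h => ?_, card_pair hst, hS.card B hB]
    rcases mem_insert.1 h with rfl | h
    · exact hs₁₂ (mem_union_left _ hp₁)
    · exact ht₁₂ (mem_singleton.1 h ▸ mem_union_left _ hp₁))]

theorem exists_fanoLines_subset_of_sides (hS : IsSteinerTripleSystem F W) (hF : #F = 7)
    {a b c x y z : ℕ} (hsix : {a, b, c, x, y, z} ⊆ F) (hnd : [a, b, c, x, y, z].Nodup)
    (habx : {a, b, x} ∈ W) (hacy : {a, c, y} ∈ W) (hbcz : {b, c, z} ∈ W) :
    ∃ w ∈ F \ {a, b, c, x, y, z}, fanoLines a b c ![x, y, z, w] ⊆ W := by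
  simp only [List.nodup_cons, List.mem_cons, List.not_mem_nil, List.nodup_nil, not_or] at hnd
  simp only [insert_subset_iff, singleton_subset_iff] at hsix
  obtain ⟨w, hw⟩ := card_eq_one.1 (by
    rw [card_sdiff_of_subset (by simp [insert_subset_iff, hsix]), hF]
    repeat rw [card_insert_of_notMem (by grind)]
    rfl : #(F \ {a, b, c, x, y, z}) = 1)
  have hw' : w ∈ F \ {a, b, c, x, y, z} := hw ▸ mem_singleton_self w
  refine ⟨w, hw', ?_⟩
  simp only [mem_sdiff, mem_insert, mem_singleton, not_or] at hw'
  have hne : ∀ {B B' : Finset ℕ} (u : ℕ), u ∉ B → u ∈ B' → B ≠ B' := fun u hu hu' h => hu (h ▸ hu')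
  have hazw : {a, z, w} ∈ W := hS.mem_of_notMem_union hF habx hacy (hne c (by grind) (by simp))
    (by simp) (by simp) hsix.2.2.2.2.2 hw'.1 (by grind) (by grind) (by grind)
  have hbyw : {b, y, w} ∈ W := hS.mem_of_notMem_union hF habx hbcz (hne c (by grind) (by simp))
    (by simp) (by simp) hsix.2.2.2.2.1 hw'.1 (by grind) (by grind) (by grind)
  have hcxw : {c, x, w} ∈ W := hS.mem_of_notMem_union hF hacy hbcz (hne b (by grind) (by simp))
    (by simp) (by simp) hsix.2.2.2.1 hw'.1 (by grind) (by grind) (by grind)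
  have hxyz : {x, y, z} ∈ W := hS.mem_of_notMem_union hF habx hcxw (hne c (by grind) (by simp))
    (by simp) (by simp) hsix.2.2.2.2.1 hsix.2.2.2.2.2 (by grind) (by grind) (by grind)
  simp [fanoLines, insert_subset_iff, habx, hacy, hbcz, hazw, hbyw, hcxw, hxyz]

theorem exists_fanoLines_subset (hS : IsSteinerTripleSystem F W) (hF : #F = 7) {a b c : ℕ}
    (ha : a ∈ F) (hb : b ∈ F) (hc : c ∈ F) (hab : a ≠ b) (hac : a ≠ c) (hbc : b ≠ c)
    (habc : {a, b, c} ∉ W) :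
    ∃ ℓ : Fin 4 → ℕ, Injective ℓ ∧ (∀ k, ℓ k ∈ F \ {a, b, c}) ∧ fanoLines a b c ℓ ⊆ W := by
  have hcollide : ∀ {B B' : Finset ℕ} {u v t : ℕ}, B ∈ W → B' ∈ W → u ≠ v → u ∈ B → v ∈ B →
      u ∈ B' → v ∈ B' → t ∈ B' → t ∈ B := fun hB hB' huv hu hv hu' hv' ht =>
    hS.eq_of_mem _ hB _ hB' _ _ huv hu hv hu' hv' ▸ ht
  obtain ⟨x, hxF, hxa, hxb, habx⟩ := hS.exists_third ha hb hab
  obtain ⟨y, hyF, hya, hyc, hacy⟩ := hS.exists_third ha hc hac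
  obtain ⟨z, hzF, hzb, hzc, hbcz⟩ := hS.exists_third hb hc hbc
  have hxc : x ≠ c := fun h => habc (h ▸ habx)
  have hyb : y ≠ b := fun h => habc (by rwa [pair_comm b c, ← h])
  have hza : z ≠ a := fun h => habc (by rwa [insert_comm a b, pair_comm a c, ← h])
  have hxy : x ≠ y := fun h => by
    have := hcollide habx (h ▸ hacy) hxa.symm (by simp) (by simp) (by simp) (by simp) (t := c)
      (by simp)
    simp [hac.symm, hbc.symm, hxc.symm] at this
  have hxz : x ≠ z := fun h => by
    have := hcollide habx (h ▸ hbcz) hxb.symm (by simp) (by simp) (by simp) (by simp) (t := c)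
      (by simp)
    simp [hac.symm, hbc.symm, hxc.symm] at this
  have hyz : y ≠ z := fun h => by
    have := hcollide hacy (h ▸ hbcz) hyc.symm (by simp) (by simp) (by simp) (by simp) (t := b)
      (by simp)
    simp [hab.symm, hbc, hyb.symm] at this
  obtain ⟨w, hw, hsub⟩ := hS.exists_fanoLines_subset_of_sides hF
    (by simp [insert_subset_iff, ha, hb, hc, hxF, hyF, hzF]) (by simp; grind) habx hacy hbcz
  simp only [mem_sdiff, mem_insert, mem_singleton, not_or] at hw
  refine ⟨![x, y, z, w], fun i j h => ?_, fun k => ?_, hsub⟩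
  · fin_cases i <;> fin_cases j <;> first | rfl | (simp at h; grind)
  · fin_cases k <;> simp <;> grind

end IsSteinerTripleSystem

end SteinerTrade

namespace IsSteinerTrade

open SteinerTrade

variable {v m : ℕ} {V : Finset ℕ} {T : Fin 3 → Finset (Finset ℕ)}

theorem isSteinerTripleSystem_of_card_seven (H : IsSteinerTrade 3 v 3 2 7 V T)
    (hn : #(foundation T) = 7) (i : Fin 3) : IsSteinerTripleSystem (foundation T) (T i) := by
  have hr : ∀ x ∈ foundation T, replication (T 0) x = 3 := by
    have hle : ∀ x ∈ foundation T, replication (T 0) x ≤ 3 := fun x hx => by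
      have := H.two_mul_replication_lt 0 hx; omega
    by_contra! ⟨x, hx, hne⟩
    have := sum_lt_sum hle ⟨x, hx, lt_of_le_of_ne (hle x hx) hne⟩
    rw [H.sum_replication 0, sum_const, hn, smul_eq_mul] at this
    omega
  refine ⟨fun B hB => subset_foundation hB, H.1.blockCard i, fun u hu w hw huw => ?_,
    fun B hB B' hB' u w huw => H.eq_of_mem_of_mem hB hB' huw⟩
  have hnb : neighbours (T i) u = (foundation T).erase u :=
    eq_of_subset_of_card_le (neighbours_subset i u) (by
      rw [card_erase_of_mem hu, hn, H.card_neighbours, H.replication_eq i 0, hr u hu])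
  obtain ⟨B, hB, huB, hwB, -⟩ := mem_neighbours.1 (hnb ▸ mem_erase.2 ⟨huw.symm, hw⟩)
  exact ⟨B, hB, huB, hwB⟩

/-- A triangle that is a line of none of the three Fano planes exists because there are 35 triples
but only 21 blocks. -/
theorem card_foundation_ne_seven (H : IsSteinerTrade 3 v 3 2 7 V T) : #(foundation T) ≠ 7 := by
  intro hn
  have hS := H.isSteinerTripleSystem_of_card_seven hn
  obtain ⟨N, hN⟩ : ((foundation T).powersetCard 3 \ (T 0 ∪ T 1 ∪ T 2)).Nonempty := by
    have h₀ := le_card_sdiff (T 0 ∪ T 1 ∪ T 2) ((foundation T).powersetCard 3)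
    have h₁ := card_union_le (T 0 ∪ T 1) (T 2)
    have h₂ := card_union_le (T 0) (T 1)
    rw [card_powersetCard, hn, show Nat.choose 7 3 = 35 from rfl] at h₀
    rw [H.1.volume 2] at h₁
    rw [H.1.volume 0, H.1.volume 1] at h₂
    rw [← card_pos]
    omega
  simp only [mem_sdiff, mem_powersetCard, mem_union, not_or] at hN
  obtain ⟨⟨hNF, hN3⟩, ⟨hN0, hN1⟩, hN2⟩ := hN
  obtain ⟨a, b, c, hab, hac, hbc, rfl⟩ := card_eq_three.1 hN3
  have hnot : ∀ i, {a, b, c} ∉ T i := by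
    intro i; fin_cases i
    exacts [hN0, hN1, hN2]
  choose ℓ hℓ using fun i => (hS i).exists_fanoLines_subset hn (hNF (by simp)) (hNF (by simp))
    (hNF (by simp)) hab hac hbc (hnot i)
  refine not_pairwise_disjoint_fanoLines hab hac hbc (Q := foundation T \ {a, b, c}) ?_
    (fun q hq => by simp only [mem_sdiff, mem_insert, mem_singleton] at hq; tauto) ℓ
    (fun i => (hℓ i).1) (fun i => (hℓ i).2.1)
    fun i j hij => (H.1.disj i j hij).mono (hℓ i).2.2 (hℓ j).2.2
  rw [card_sdiff_of_subset hNF, hn, card_eq_three.2 ⟨a, b, c, hab, hac, hbc, rfl⟩]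

theorem volume_notMem (H : IsSteinerTrade 3 v 3 2 m V T) :
    m ∉ ({1, 2, 3, 4, 5, 7} : Finset ℕ) := by
  simp only [mem_insert, mem_singleton, not_or]
  refine ⟨?_, ?_, ?_, ?_, ?_, ?_⟩
  iterate 5 (rintro rfl; exact absurd (H.eq_zero_of_le_five (by norm_num)) (by norm_num))
  rintro rfl
  have h₁ := H.six_mul_le 0
  have h₂ := H.card_foundation_bound
  have h₇ := H.card_foundation_ne_seven
  have h₈ := H.card_foundation_ne_eight
  generalize #(foundation T) = n at *
  have : n ≤ 8 := by omega
  interval_cases n <;> omega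

end IsSteinerTrade

/-- The spectrum of 3-way (v,3,2) Steiner trades: a 3-way (v,3,2) Steiner
trade of volume m exists (for some v) if and only if m ∉ {1,2,3,4,5,7}. -/
theorem spectrum_3way_steiner_k3 (m : ℕ) :
    (∃ (v : ℕ) (V : Finset ℕ) (T : Fin 3 → Finset (Finset ℕ)),
      IsSteinerTrade 3 v 3 2 m V T) ↔ m ∉ ({1, 2, 3, 4, 5, 7} : Finset ℕ) :=
  ⟨fun ⟨_, _, _, H⟩ => H.volume_notMem, SteinerTrade.exists_of_notMem⟩
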